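/- Let d ≥ 1 be an integer and let β satisfy 0 < β < 1/2. There exists a constant C > 0, depending only on d and β, with the following property: for every finite Borel measure σ on ℝ^d with compact support Γ, every bounded continuous φ : ℝ^d × ℝ → ℝ with |φ| ≤ M everywhere, every x ∈ ℝ^d with δ := dist(x, Γ) > 0, and every t > 0, the spatial gradient of the single-layer heat potential v(x,t) := ∫_0^t ∫ Φ(x,t;y,s) φ(y,s) dσ(y) ds satisfies ‖∇_x v(x,t)‖ ≤ C · M · σ(ℝ^d) · t^{1−β} · δ^{−(d+1−2β)}. -/

import Mathlib

open MeasureTheory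

/-- The fundamental solution of the heat equation on `ℝ^d`:
`Φ(x,t;y,s) = (4π(t−s))^{−d/2} exp(−‖x−y‖²/(4(t−s)))` for `t > s`, and `0` for `t ≤ s`. -/
noncomputable def Phi (d : ℕ) (x : EuclideanSpace ℝ (Fin d)) (t : ℝ)
    (y : EuclideanSpace ℝ (Fin d)) (s : ℝ) : ℝ :=
  if t ≤ s then 0
  else (4 * Real.pi * (t - s)) ^ (-(d : ℝ) / 2) * Real.exp (-‖x - y‖ ^ 2 / (4 * (t - s)))

/-- The single-layer heat potential `v(x,t) = ∫_0^t ∫ Φ(x,t;y,s) φ(y,s) dσ(y) ds`. -/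
noncomputable def singleLayer (d : ℕ) (σ : Measure (EuclideanSpace ℝ (Fin d)))
    (φ : EuclideanSpace ℝ (Fin d) → ℝ → ℝ)
    (x : EuclideanSpace ℝ (Fin d)) (t : ℝ) : ℝ :=
  ∫ s in Set.Ioc 0 t, ∫ y, Phi d x t y s * φ y s ∂σ

/-! The gradient of the heat kernel is `∇ₓΦ = -Φ · (x - y) / (2(t - s))`. Trading part of the
Gaussian factor for powers via `e^{-u} ≤ α^α u^{-α}` (with `α = d/2 + 1 - β`) gives
`‖∇ₓΦ‖ ≲ (t - s)^{-β} ‖x - y‖^{-(d+1-2β)}`. For `z` within `δ/2` of `x` every `y ∈ Γ` has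
`‖z - y‖ ≥ δ/2`, so the integrand of `∇v` is dominated, uniformly in `z`, by a multiple of the
integrable weight `(t - s)^{-β}`. Differentiating under the integral over `(0, t] × Γ` and using
`∫₀ᵗ (t - s)^{-β} ds = t^{1-β}/(1-β)` gives the bound. -/

open Real Set Filter Metric Topology

theorem exp_neg_le_rpow_mul_rpow_neg {α u : ℝ} (hα : 0 ≤ α) (hu : 0 < u) :
    exp (-u) ≤ α ^ α * u ^ (-α) := by
  rcases hα.eq_or_lt with rfl | hα
  · simpa using exp_le_one_iff.mpr (neg_nonpos.mpr hu.le)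
  have hlin : u / α ≤ exp (u / α) := by linarith [add_one_le_exp (u / α)]
  have hpow : (u / α) ^ α ≤ exp u := by
    calc (u / α) ^ α ≤ exp (u / α) ^ α := by gcongr
      _ = exp u := by rw [← exp_mul, div_mul_cancel₀ _ hα.ne']
  rw [div_rpow hu.le hα.le, div_le_iff₀ (by positivity)] at hpow
  rw [exp_neg, rpow_neg hu.le, ← div_eq_mul_inv, le_div_iff₀ (by positivity),
    inv_mul_le_iff₀ (exp_pos u)]
  linarith

theorem exp_neg_sq_div_le {c τ r : ℝ} (hc : 0 ≤ c) (hτ : 0 < τ) (hr : 0 < r) :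
    exp (-r ^ 2 / (4 * τ)) ≤ (4 * c) ^ c * τ ^ c * r ^ (-2 * c) := by
  have hexp := exp_neg_le_rpow_mul_rpow_neg hc (show 0 < r ^ 2 / (4 * τ) by positivity)
  have hsplit : (r ^ 2 / (4 * τ)) ^ (-c) = 4 ^ c * τ ^ c * r ^ (-2 * c) := by
    rw [div_rpow (by positivity) (by positivity), mul_rpow (by norm_num) hτ.le,
      ← rpow_natCast r 2, ← rpow_mul hr.le, rpow_neg (by norm_num), rpow_neg hτ.le,
      show ((2 : ℕ) : ℝ) * -c = -2 * c by push_cast; ring]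
    field_simp
  calc exp (-r ^ 2 / (4 * τ)) ≤ c ^ c * (4 ^ c * τ ^ c * r ^ (-2 * c)) := by
        rwa [neg_div, ← hsplit]
    _ = (4 * c) ^ c * τ ^ c * r ^ (-2 * c) := by rw [mul_rpow (by norm_num) hc]; ring

theorem integrableOn_sub_rpow_neg {β t : ℝ} (hβ : β < 1) (ht : 0 ≤ t) :
    IntegrableOn (fun s => (t - s) ^ (-β)) (Ioc 0 t) := by
  have h := ((intervalIntegral.intervalIntegrable_rpow' (a := 0) (b := t)
    (by linarith : -1 < -β)).comp_sub_left t).symm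
  rw [sub_zero, sub_self] at h
  exact (intervalIntegrable_iff_integrableOn_Ioc_of_le ht).mp h

theorem setIntegral_sub_rpow_neg {β t : ℝ} (hβ : β < 1) (ht : 0 ≤ t) :
    ∫ s in Ioc 0 t, (t - s) ^ (-β) = t ^ (1 - β) / (1 - β) := by
  rw [← intervalIntegral.integral_of_le ht,
    intervalIntegral.integral_comp_sub_left (fun u => u ^ (-β)) t, sub_self, sub_zero,
    integral_rpow (Or.inl (by linarith)), zero_rpow (by linarith), sub_zero,
    show -β + 1 = 1 - β by ring]

theorem integral_prod_mul_sub_rpow_neg {E : Type*} [MeasurableSpace E] (σ : Measure E)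
    [IsFiniteMeasure σ] {β t : ℝ} (hβ : β < 1) (ht : 0 ≤ t) (A : ℝ) :
    ∫ q : ℝ × E, A * (t - q.1) ^ (-β) ∂(volume.restrict (Ioc 0 t)).prod σ =
      A * (σ.real univ * (t ^ (1 - β) / (1 - β))) := by
  rw [integral_fun_fst (fun s => A * (t - s) ^ (-β)), integral_const_mul,
    setIntegral_sub_rpow_neg hβ ht, smul_eq_mul]
  ring

theorem norm_fderiv_integral_le {α H E : Type*} [MeasurableSpace α] {μ : Measure α}
    [NormedAddCommGroup H] [NormedSpace ℝ H] [NormedAddCommGroup E] [NormedSpace ℝ E]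
    {F : H → α → E} {F' : H → α → H →L[ℝ] E} {x : H} {s : Set H} {bound : α → ℝ}
    (hs : s ∈ 𝓝 x) (hF_meas : ∀ᶠ z in 𝓝 x, AEStronglyMeasurable (F z) μ)
    (hF_int : Integrable (F x) μ) (hF'_meas : AEStronglyMeasurable (F' x) μ)
    (h_bound : ∀ᵐ a ∂μ, ∀ z ∈ s, ‖F' z a‖ ≤ bound a) (bound_integrable : Integrable bound μ)
    (h_diff : ∀ᵐ a ∂μ, ∀ z ∈ s, HasFDerivAt (F · a) (F' z a) z) :
    ‖fderiv ℝ (fun z => ∫ a, F z a ∂μ) x‖ ≤ ∫ a, bound a ∂μ := by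
  rw [(hasFDerivAt_integral_of_dominated_of_fderiv_le hs hF_meas hF_int hF'_meas h_bound
    bound_integrable h_diff).fderiv]
  exact norm_integral_le_of_norm_le bound_integrable
    (h_bound.mono fun a ha => ha x (mem_of_mem_nhds hs))

theorem half_infDist_le_dist {X : Type*} [PseudoMetricSpace X] {Γ : Set X} {x z y : X}
    (hz : z ∈ ball x (infDist x Γ / 2)) (hy : y ∈ Γ) : infDist x Γ / 2 ≤ dist z y := by
  have := infDist_le_dist_of_mem hy (x := x)
  linarith [dist_triangle x z y, dist_comm x z, mem_ball.mp hz]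

theorem ae_prod_lt_and_mem {E : Type*} [MeasurableSpace E] {σ : Measure E} [SFinite σ]
    {Γ : Set E} (hΓ : σ Γᶜ = 0) (t : ℝ) :
    ∀ᵐ q ∂(volume.restrict (Ioc 0 t)).prod σ, q.1 < t ∧ q.2 ∈ Γ := by
  have hs : ∀ᵐ s ∂volume.restrict (Ioc 0 t), s < t := by
    filter_upwards [ae_restrict_mem measurableSet_Ioc, ae_restrict_of_ae (volume.ae_ne t)]
      with s hs hst using hs.2.lt_of_ne hst
  filter_upwards [Measure.quasiMeasurePreserving_fst.ae hs,
    Measure.quasiMeasurePreserving_snd.ae (mem_ae_iff.mpr hΓ)] with q hq₁ hq₂ using ⟨hq₁, hq₂⟩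

section HeatKernel

variable {d : ℕ} {x y : EuclideanSpace ℝ (Fin d)} {t s : ℝ}

theorem Phi_of_lt (hst : s < t) :
    Phi d x t y s =
      (4 * π * (t - s)) ^ (-(d : ℝ) / 2) * exp (-‖x - y‖ ^ 2 / (4 * (t - s))) :=
  if_neg hst.not_ge

theorem Phi_nonneg : 0 ≤ Phi d x t y s := by
  unfold Phi
  split_ifs with hts
  · exact le_rfl
  · have : 0 ≤ 4 * π * (t - s) := mul_nonneg (by positivity) (sub_nonneg.mpr (le_of_not_ge hts))
    positivity

theorem Phi_le_rpow {c : ℝ} (hc : 0 ≤ c) (hst : s < t) (hxy : x ≠ y) :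
    Phi d x t y s ≤
      (4 * π) ^ (-(d : ℝ) / 2) * (4 * c) ^ c * (t - s) ^ (c - d / 2) *
        ‖x - y‖ ^ (-2 * c) := by
  have hτ : 0 < t - s := sub_pos.mpr hst
  have hgauss := exp_neg_sq_div_le hc hτ (norm_sub_pos_iff.mpr hxy)
  calc Phi d x t y s
      = (4 * π) ^ (-(d : ℝ) / 2) * (t - s) ^ (-(d : ℝ) / 2) *
          exp (-‖x - y‖ ^ 2 / (4 * (t - s))) := by
        rw [Phi_of_lt hst, mul_rpow (by positivity) hτ.le]
    _ ≤ (4 * π) ^ (-(d : ℝ) / 2) * (t - s) ^ (-(d : ℝ) / 2) *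
          ((4 * c) ^ c * (t - s) ^ c * ‖x - y‖ ^ (-2 * c)) := by gcongr
    _ = _ := by rw [show c - d / 2 = -(d : ℝ) / 2 + c by ring, rpow_add hτ]; ring

theorem exists_Phi_le_of_le_norm {ρ : ℝ} (hρ : 0 < ρ) :
    ∃ K, ∀ (x y : EuclideanSpace ℝ (Fin d)) (t s : ℝ), ρ ≤ ‖x - y‖ → Phi d x t y s ≤ K := by
  refine ⟨(4 * π) ^ (-(d : ℝ) / 2) * (4 * (d / 2)) ^ ((d : ℝ) / 2) * ρ ^ (-(d : ℝ)),
    fun x y t s hρxy => ?_⟩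
  have hxy : 0 < ‖x - y‖ := hρ.trans_le hρxy
  rcases le_or_gt t s with hts | hst
  · rw [Phi, if_pos hts]; positivity
  calc Phi d x t y s
      ≤ (4 * π) ^ (-(d : ℝ) / 2) * (4 * (d / 2)) ^ ((d : ℝ) / 2) *
          (t - s) ^ ((d : ℝ) / 2 - d / 2) * ‖x - y‖ ^ (-2 * ((d : ℝ) / 2)) :=
        Phi_le_rpow (by positivity) hst (norm_sub_pos_iff.mp hxy)
    _ ≤ _ := by
        rw [sub_self, rpow_zero, mul_one, show -2 * ((d : ℝ) / 2) = -d by ring]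
        exact mul_le_mul_of_nonneg_left
          (rpow_le_rpow_of_nonpos hρ hρxy (neg_nonpos.mpr d.cast_nonneg)) (by positivity)

theorem measurable_Phi_prod :
    Measurable fun q : ℝ × EuclideanSpace ℝ (Fin d) => Phi d x t q.2 q.1 := by
  unfold Phi
  exact Measurable.ite (measurableSet_le measurable_const measurable_fst) measurable_const
    (by fun_prop)

noncomputable def gradPhi (d : ℕ) (x : EuclideanSpace ℝ (Fin d)) (t : ℝ)
    (y : EuclideanSpace ℝ (Fin d)) (s : ℝ) : EuclideanSpace ℝ (Fin d) →L[ℝ] ℝ :=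
  (-(Phi d x t y s / (2 * (t - s)))) • innerSL ℝ (x - y)

theorem hasFDerivAt_Phi (hst : s < t) :
    HasFDerivAt (fun z => Phi d z t y s) (gradPhi d x t y s) x := by
  have hPhi : (fun z => Phi d z t y s) = fun z =>
      (4 * π * (t - s)) ^ (-(d : ℝ) / 2) * exp (-(4 * (t - s))⁻¹ * ‖z - y‖ ^ 2) := by
    ext z; rw [Phi_of_lt hst]; ring_nf
  rw [hPhi]
  refine ((((hasFDerivAt_id x).sub_const y).norm_sq.const_mul
    (-(4 * (t - s))⁻¹)).exp.const_mul ((4 * π * (t - s)) ^ (-(d : ℝ) / 2))).congr_fderiv ?_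
  ext v
  simp only [gradPhi, Phi_of_lt hst, id_eq, ContinuousLinearMap.comp_id, map_sub, neg_smul,
    smul_neg, neg_mul, mul_inv_rev, neg_apply, smul_apply, sub_apply, coe_innerSL_apply,
    nsmul_eq_mul, Nat.cast_ofNat, smul_eq_mul, neg_inj]
  field_simp
  ring

theorem norm_gradPhi (hst : s < t) :
    ‖gradPhi d x t y s‖ = Phi d x t y s * ‖x - y‖ / (2 * (t - s)) := by
  have hτ : 0 < 2 * (t - s) := by linarith
  rw [gradPhi, norm_smul, innerSL_apply_norm, norm_neg, Real.norm_eq_abs,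
    abs_of_nonneg (div_nonneg Phi_nonneg hτ.le)]
  ring

theorem measurable_gradPhi_prod :
    Measurable fun q : ℝ × EuclideanSpace ℝ (Fin d) => gradPhi d x t q.2 q.1 := by
  unfold gradPhi
  exact (measurable_Phi_prod.div (by fun_prop)).neg.smul
    ((innerSL ℝ).continuous.measurable.comp (by fun_prop))

/-- The constant of `Phi_le_rpow` at `c = d/2 + 1 - β`, halved. -/
noncomputable def gradPhiConst (d : ℕ) (β : ℝ) : ℝ :=
  (4 * π) ^ (-(d : ℝ) / 2) * (4 * (d / 2 + 1 - β)) ^ ((d : ℝ) / 2 + 1 - β) / 2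

theorem gradPhiConst_pos {β : ℝ} (hβ : β < d / 2 + 1) : 0 < gradPhiConst d β := by
  have : 0 < (d : ℝ) / 2 + 1 - β := by linarith
  unfold gradPhiConst; positivity

theorem norm_gradPhi_le {β : ℝ} (hβ : β ≤ d / 2 + 1) (hst : s < t) (hxy : x ≠ y) :
    ‖gradPhi d x t y s‖ ≤
      gradPhiConst d β * (t - s) ^ (-β) * ‖x - y‖ ^ (-((d : ℝ) + 1 - 2 * β)) := by
  set c := (d : ℝ) / 2 + 1 - β
  have hc : 0 ≤ c := by simp only [c]; linarith
  have hK : gradPhiConst d β = (4 * π) ^ (-(d : ℝ) / 2) * (4 * c) ^ c / 2 := rfl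
  have hτ : 0 < t - s := sub_pos.mpr hst
  have hr : 0 < ‖x - y‖ := norm_sub_pos_iff.mpr hxy
  rw [norm_gradPhi hst]
  calc Phi d x t y s * ‖x - y‖ / (2 * (t - s))
      ≤ (4 * π) ^ (-(d : ℝ) / 2) * (4 * c) ^ c * (t - s) ^ (c - d / 2) *
          ‖x - y‖ ^ (-2 * c) * ‖x - y‖ / (2 * (t - s)) := by
        gcongr; exact Phi_le_rpow hc hst hxy
    _ = _ := by
        rw [show -((d : ℝ) + 1 - 2 * β) = -2 * c + 1 by ring, show -β = c - d / 2 - 1 by ring,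
          rpow_add hr, rpow_sub_one hτ.ne', rpow_one, hK]
        field_simp

theorem norm_smul_gradPhi_le {β ρ c M : ℝ} {z : EuclideanSpace ℝ (Fin d)}
    (hβ : 2 * β ≤ d + 1) (hρ : 0 < ρ) (hρzy : ρ ≤ ‖z - y‖) (hst : s < t) (hc : |c| ≤ M) :
    ‖c • gradPhi d z t y s‖ ≤
      M * gradPhiConst d β * ρ ^ (-((d : ℝ) + 1 - 2 * β)) * (t - s) ^ (-β) := by
  have hzy : 0 < ‖z - y‖ := hρ.trans_le hρzy
  have hK : 0 < gradPhiConst d β := gradPhiConst_pos (by linarith)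
  have hM : 0 ≤ M := (abs_nonneg c).trans hc
  rw [norm_smul, Real.norm_eq_abs]
  calc |c| * ‖gradPhi d z t y s‖
      ≤ M * (gradPhiConst d β * (t - s) ^ (-β) * ‖z - y‖ ^ (-((d : ℝ) + 1 - 2 * β))) :=
        mul_le_mul hc (norm_gradPhi_le (by linarith) hst (norm_sub_pos_iff.mp hzy))
          (norm_nonneg _) hM
    _ ≤ M * (gradPhiConst d β * (t - s) ^ (-β) * ρ ^ (-((d : ℝ) + 1 - 2 * β))) := by
        have hr := rpow_le_rpow_of_nonpos hρ hρzy (by linarith : -((d : ℝ) + 1 - 2 * β) ≤ 0)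
        gcongr
    _ = _ := by ring

end HeatKernel

section SingleLayer

variable {d : ℕ} {σ : Measure (EuclideanSpace ℝ (Fin d))} [IsFiniteMeasure σ]
  {Γ : Set (EuclideanSpace ℝ (Fin d))} {φ : EuclideanSpace ℝ (Fin d) → ℝ → ℝ} {M t : ℝ}
  {x : EuclideanSpace ℝ (Fin d)}

theorem integrable_Phi_mul (hΓ : σ Γᶜ = 0)
    (hφ : Continuous fun p : EuclideanSpace ℝ (Fin d) × ℝ => φ p.1 p.2)
    (hM : ∀ y s, |φ y s| ≤ M) {ρ : ℝ} (hρ : 0 < ρ) (hx : ∀ y ∈ Γ, ρ ≤ ‖x - y‖) :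
    Integrable (fun q : ℝ × EuclideanSpace ℝ (Fin d) => Phi d x t q.2 q.1 * φ q.2 q.1)
      ((volume.restrict (Ioc 0 t)).prod σ) := by
  obtain ⟨K, hK⟩ := exists_Phi_le_of_le_norm (d := d) hρ
  refine Integrable.of_bound (measurable_Phi_prod.mul
    (hφ.measurable.comp measurable_swap)).aestronglyMeasurable (K * M) ?_
  filter_upwards [ae_prod_lt_and_mem hΓ t] with q hq
  have hPhiK := hK x q.2 t q.1 (hx q.2 hq.2)
  rw [norm_mul, Real.norm_of_nonneg Phi_nonneg, Real.norm_eq_abs]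
  exact mul_le_mul hPhiK (hM _ _) (abs_nonneg _) (Phi_nonneg.trans hPhiK)

theorem norm_fderiv_singleLayer_le {β : ℝ} (hβ1 : β < 1) (hβd : 2 * β ≤ d + 1)
    (hΓ : σ Γᶜ = 0) (hφ : Continuous fun p : EuclideanSpace ℝ (Fin d) × ℝ => φ p.1 p.2)
    (hM : ∀ y s, |φ y s| ≤ M) (hx : 0 < infDist x Γ) (ht : 0 ≤ t) :
    ‖fderiv ℝ (fun z => singleLayer d σ φ z t) x‖ ≤
      M * gradPhiConst d β * (infDist x Γ / 2) ^ (-((d : ℝ) + 1 - 2 * β)) *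
        (σ.real univ * (t ^ (1 - β) / (1 - β))) := by
  set ρ := infDist x Γ / 2
  have hρ : 0 < ρ := half_pos hx
  have hnhds : ball x ρ ∈ 𝓝 x := ball_mem_nhds x hρ
  have hball : ∀ z ∈ ball x ρ, ∀ y ∈ Γ, ρ ≤ ‖z - y‖ := fun z hz y hy =>
    (half_infDist_le_dist hz hy).trans_eq (dist_eq_norm z y)
  have hint : ∀ z ∈ ball x ρ, Integrable (fun q : ℝ × EuclideanSpace ℝ (Fin d) =>
      Phi d z t q.2 q.1 * φ q.2 q.1) ((volume.restrict (Ioc 0 t)).prod σ) := fun z hz =>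
    integrable_Phi_mul hΓ hφ hM hρ (hball z hz)
  have hv : (fun z => singleLayer d σ φ z t) =ᶠ[𝓝 x]
      fun z => ∫ q, Phi d z t q.2 q.1 * φ q.2 q.1 ∂(volume.restrict (Ioc 0 t)).prod σ :=
    eventually_of_mem hnhds fun z hz => (integral_prod _ (hint z hz)).symm
  have hφ_meas : Measurable fun q : ℝ × EuclideanSpace ℝ (Fin d) => φ q.2 q.1 :=
    hφ.measurable.comp measurable_swap
  rw [hv.fderiv_eq, ← integral_prod_mul_sub_rpow_neg σ hβ1 ht]
  refine norm_fderiv_integral_le (F' := fun z q => φ q.2 q.1 • gradPhi d z t q.2 q.1) hnhds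
    (eventually_of_mem hnhds fun z hz => (hint z hz).aestronglyMeasurable)
    (hint x (mem_ball_self hρ))
    (hφ_meas.smul measurable_gradPhi_prod).aestronglyMeasurable ?_
    (((integrableOn_sub_rpow_neg hβ1 ht).const_mul _).comp_fst σ) ?_
  · filter_upwards [ae_prod_lt_and_mem hΓ t] with q hq z hz
    exact norm_smul_gradPhi_le hβd hρ (hball z hz q.2 hq.2) hq.1 (hM _ _)
  · filter_upwards [ae_prod_lt_and_mem hΓ t] with q hq z _
    exact (hasFDerivAt_Phi hq.1).mul_const _

end SingleLayer

theorem singleLayer_gradient_bound_general (d : ℕ) (β : ℝ)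
    (hβ : β < 1 / 2) :
    ∃ C : ℝ, 0 < C ∧
      ∀ (σ : Measure (EuclideanSpace ℝ (Fin d))) (_ : IsFiniteMeasure σ)
        (Γ : Set (EuclideanSpace ℝ (Fin d))), IsCompact Γ → σ Γᶜ = 0 →
        ∀ (φ : EuclideanSpace ℝ (Fin d) → ℝ → ℝ),
          (Continuous fun p : EuclideanSpace ℝ (Fin d) × ℝ => φ p.1 p.2) →
          ∀ M : ℝ, (∀ y s, |φ y s| ≤ M) →
          ∀ x : EuclideanSpace ℝ (Fin d), 0 < Metric.infDist x Γ →
          ∀ t : ℝ, 0 < t →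
            ‖fderiv ℝ (fun z => singleLayer d σ φ z t) x‖ ≤
              C * M * (σ Set.univ).toReal * t ^ (1 - β) *
                (Metric.infDist x Γ) ^ (-((d : ℝ) + 1 - 2 * β)) := by
  have hd : (0 : ℝ) ≤ d := d.cast_nonneg
  have hK : 0 < gradPhiConst d β := gradPhiConst_pos (by linarith)
  have h1β : 0 < 1 - β := by linarith
  refine ⟨gradPhiConst d β * 2 ^ ((d : ℝ) + 1 - 2 * β) / (1 - β), by positivity, ?_⟩
  intro σ _ Γ _ hΓ φ hφ M hM x hx t ht
  calc ‖fderiv ℝ (fun z => singleLayer d σ φ z t) x‖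
      ≤ M * gradPhiConst d β * (infDist x Γ / 2) ^ (-((d : ℝ) + 1 - 2 * β)) *
          (σ.real univ * (t ^ (1 - β) / (1 - β))) :=
        norm_fderiv_singleLayer_le (by linarith) (by linarith) hΓ hφ hM hx ht.le
    _ = _ := by
        rw [div_rpow hx.le zero_le_two, rpow_neg zero_le_two, measureReal_def]
        field_simp

/-- Pointwise gradient bound for the single-layer potential:
`‖∇_x v(x,t)‖ ≤ C M σ(ℝ^d) t^{1−β} δ^{−(d+1−2β)}` with `δ = dist(x, Γ)`. -/
theorem singleLayer_gradient_bound (d : ℕ) (hd : 1 ≤ d) (β : ℝ)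
    (hβ0 : 0 < β) (hβ : β < 1 / 2) :
    ∃ C : ℝ, 0 < C ∧
      ∀ (σ : Measure (EuclideanSpace ℝ (Fin d))) (_ : IsFiniteMeasure σ)
        (Γ : Set (EuclideanSpace ℝ (Fin d))), IsCompact Γ → σ Γᶜ = 0 →
        ∀ (φ : EuclideanSpace ℝ (Fin d) → ℝ → ℝ),
          (Continuous fun p : EuclideanSpace ℝ (Fin d) × ℝ => φ p.1 p.2) →
          ∀ M : ℝ, (∀ y s, |φ y s| ≤ M) →
          ∀ x : EuclideanSpace ℝ (Fin d), 0 < Metric.infDist x Γ →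
          ∀ t : ℝ, 0 < t →
            ‖fderiv ℝ (fun z => singleLayer d σ φ z t) x‖ ≤
              C * M * (σ Set.univ).toReal * t ^ (1 - β) *
                (Metric.infDist x Γ) ^ (-((d : ℝ) + 1 - 2 * β)) :=
  singleLayer_gradient_bound_general d β hβ
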